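/- arXiv:1910.09884 — 7 statements merged into one kernel-verified Lean document; each statement's English description precedes it below -/
import Mathlib

section
/- Let R be a commutative ring, S a multiplicative subset of R, and π : R → S⁻¹R the canonical localization map. For f ∈ R, f belongs to the intersection of all prime ideals of R lying in the image of the induced map Spec(S⁻¹R) → Spec(R) if and only if there exists g ∈ S such that f·g is nilpotent. -/
theorem Ideal.forall_mem_of_exists_isPrime_comap_iff_isNilpotent {R A : Type*} [CommSemiring R]
    [CommSemiring A] (φ : R →+* A) (f : R) :
    (∀ p : Ideal R, (∃ q : Ideal A, q.IsPrime ∧ q.comap φ = p) → f ∈ p) ↔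
      IsNilpotent (φ f) := by
  rw [nilpotent_iff_mem_prime]
  exact ⟨fun h q hq ↦ h _ ⟨q, hq, rfl⟩, fun h _ ⟨q, hq, hqp⟩ ↦ hqp ▸ h q hq⟩

theorem IsLocalization.isNilpotent_algebraMap_iff {R S : Type*} [CommSemiring R] [CommSemiring S]
    [Algebra R S] (M : Submonoid R) [IsLocalization M S] (f : R) :
    IsNilpotent (algebraMap R S f) ↔ ∃ g ∈ M, IsNilpotent (f * g) := by
  constructor
  · rintro ⟨n, hn⟩
    obtain ⟨s, hs⟩ := (IsLocalization.map_eq_zero_iff M S _).mp (by rwa [map_pow])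
    refine ⟨s, s.2, n + 1, ?_⟩
    calc (f * s) ^ (n + 1) = f * s ^ n * (s * f ^ n) := by ring
      _ = 0 := by rw [hs, mul_zero]
  · rintro ⟨g, hg, hfg⟩
    have hg_unit : IsUnit (algebraMap R S g) := IsLocalization.map_units S ⟨g, hg⟩
    rw [← hg_unit.isNilpotent_mul_unit_of_commute_iff (Commute.all _ _), ← map_mul]
    exact hfg.map _

/-- For the canonical map `π : R → S⁻¹R`, an element `f ∈ R` lies in the intersection of all
primes of `R` in the image of `Spec(S⁻¹R) → Spec(R)` iff `f * g` is nilpotent for some `g ∈ S`. -/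
theorem stmt0 {R : Type*} [CommRing R] (S : Submonoid R) (f : R) :
    (∀ p : Ideal R, (∃ q : Ideal (Localization S), q.IsPrime ∧
        q.comap (algebraMap R (Localization S)) = p) → f ∈ p) ↔
      ∃ g ∈ S, IsNilpotent (f * g) := by
  rw [Ideal.forall_mem_of_exists_isPrime_comap_iff_isNilpotent,
    IsLocalization.isNilpotent_algebraMap_iff S]
end

section
/- For any commutative ring R and any f ∈ R, the set Min(R) ∩ V(f) of minimal primes containing f is open in Min(R) with the subspace Zariski topology. -/
/-!
At a minimal prime `p` the localization `R_p` has a unique prime ideal, so every element of `p`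
becomes nilpotent there: `f ∈ p` iff some `s ∉ p` kills a power of `f`. Hence on `Min(R)` the set
`V(f)` agrees with the complement of the closed set `V({s | ∃ n, s * f ^ n = 0})`.
-/

namespace Ideal

variable {R : Type*} [CommRing R]

theorem IsPrime.mem_of_mul_pow_eq_zero {p : Ideal R} (hp : p.IsPrime) {s f : R} (hs : s ∉ p)
    {n : ℕ} (h : s * f ^ n = 0) : f ∈ p :=
  hp.mem_of_pow_mem n ((hp.mem_or_mem (h ▸ p.zero_mem)).resolve_left hs)

theorem exists_mul_pow_eq_zero_of_mem_minimalPrimes {p : Ideal R} (hp : p ∈ minimalPrimes R)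
    {f : R} (hf : f ∈ p) : ∃ s ∉ p, ∃ n : ℕ, s * f ^ n = 0 := by
  have := hp.isPrime
  have := Ring.KrullDimLE.of_isLocalization p hp (Localization.AtPrime p)
  have hmax : algebraMap R (Localization.AtPrime p) f ∈
      IsLocalRing.maximalIdeal (Localization.AtPrime p) :=
    (IsLocalization.AtPrime.to_map_mem_maximal_iff _ p f).mpr hf
  obtain ⟨n, hn⟩ := Ring.KrullDimLE.isNilpotent_iff_mem_maximalIdeal.mpr hmax
  rw [← map_pow, IsLocalization.map_eq_zero_iff p.primeCompl] at hn
  obtain ⟨⟨s, hs⟩, hsn⟩ := hn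
  exact ⟨s, hs, n, hsn⟩

end Ideal

/-- For any commutative ring `R` and `f ∈ R`, the set `Min(R) ∩ V(f)` is open in `Min(R)`
with the subspace Zariski topology. -/
theorem stmt2 {R : Type*} [CommRing R] (f : R) :
    IsOpen {p : {p : PrimeSpectrum R // p.asIdeal ∈ minimalPrimes R} | f ∈ p.1.asIdeal} := by
  rw [isOpen_induced_iff]
  refine ⟨(PrimeSpectrum.zeroLocus {s | ∃ n : ℕ, s * f ^ n = 0})ᶜ,
    (PrimeSpectrum.isClosed_zeroLocus _).isOpen_compl, ?_⟩
  ext ⟨p, hp⟩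
  simp only [Set.mem_preimage, Set.mem_compl_iff, PrimeSpectrum.mem_zeroLocus, Set.not_subset,
    Set.mem_ofPred_eq, SetLike.mem_coe]
  constructor
  · rintro ⟨s, ⟨n, hsn⟩, hs⟩
    exact p.isPrime.mem_of_mul_pow_eq_zero hs hsn
  · intro hf
    obtain ⟨s, hs, n, hsn⟩ := Ideal.exists_mul_pow_eq_zero_of_mem_minimalPrimes hp hf
    exact ⟨s, ⟨n, hsn⟩, hs⟩
end

section
/- Let Λ = ∏_{x ∈ X} R_x be a direct product of integral domains indexed by a set X. Then the minimal spectrum Min(Λ) is compact (quasi-compact and Hausdorff) in the Zariski topology. -/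
/-!
A prime `p` of `Λ = ∏ R_x` is controlled by the idempotents `1_s` it avoids: they form an
ultrafilter `U_p` on `X`, and `p` contains the ideal `I_U` of functions vanishing `U`-almost
everywhere, which is prime for every ultrafilter `U` because each `R_x` is a domain. Hence the
minimal primes are exactly the `I_U`, and `U ↦ I_U` is a continuous surjection from the compact
space of ultrafilters onto `Min(Λ)`.

Hausdorffness holds in any commutative ring: if `p` is minimal and `a ∈ p`, then `a ^ n * b = 0`
for some `b ∉ p`, so `D(b)` and `D(a)` separate `p` from every minimal prime not containing `a`.
-/

section MinimalPrimes

variable {A : Type*} [CommSemiring A]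

theorem Ideal.exists_pow_mul_eq_zero_of_mem_minimalPrimes {p : Ideal A}
    (hp : p ∈ minimalPrimes A) {a : A} (ha : a ∈ p) : ∃ b ∉ p, ∃ n : ℕ, a ^ n * b = 0 := by
  have := hp.1.1
  -- `pA_p` is the only prime of `A_p`, so it is the nilradical.
  obtain ⟨n, hn⟩ : algebraMap A (Localization.AtPrime p) a ∈
      (Ideal.map (algebraMap A (Localization.AtPrime p)) ⊥).radical := by
    rw [IsLocalization.AtPrime.radical_map_of_mem_minimalPrimes _ p ⊥ hp]
    exact Ideal.mem_map_of_mem _ ha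
  rw [Ideal.map_bot, Ideal.mem_bot, ← map_pow,
    IsLocalization.map_eq_zero_iff p.primeCompl] at hn
  obtain ⟨⟨b, hb⟩, hab⟩ := hn
  exact ⟨b, hb, n, by rw [mul_comm]; exact hab⟩

open PrimeSpectrum in
theorem PrimeSpectrum.t2Space_minimalPrimes :
    T2Space {p : PrimeSpectrum A // p.asIdeal ∈ minimalPrimes A} := by
  refine ⟨fun ⟨p, hp⟩ ⟨q, hq⟩ hpq => ?_⟩
  have hpq' : ¬ p.asIdeal ≤ q.asIdeal := fun hle =>
    hpq (Subtype.ext (PrimeSpectrum.ext (le_antisymm hle (hq.2 ⟨p.isPrime, bot_le⟩ hle))))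
  obtain ⟨a, hap, haq⟩ := SetLike.not_le_iff_exists.mp hpq'
  obtain ⟨b, hbp, n, hab⟩ := Ideal.exists_pow_mul_eq_zero_of_mem_minimalPrimes hp hap
  refine ⟨Subtype.val ⁻¹' basicOpen b, Subtype.val ⁻¹' basicOpen a,
    (basicOpen b).isOpen.preimage continuous_subtype_val,
    (basicOpen a).isOpen.preimage continuous_subtype_val, hbp, haq,
    Set.disjoint_left.mpr fun r hrb hra => ?_⟩
  have hmem : a ^ n * b ∈ r.1.asIdeal := hab ▸ r.1.asIdeal.zero_mem
  exact (r.1.isPrime.mem_or_mem hmem).elim (fun h => hra (r.1.isPrime.mem_of_pow_mem n h)) hrb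

end MinimalPrimes

section PiDomain

variable {X : Type*} (R : X → Type*) [∀ x, CommRing (R x)]

open Classical in
noncomputable def piIndicator (s : Set X) : ∀ x, R x := fun x => if x ∈ s then 1 else 0

variable {R}

theorem piIndicator_apply_eq_zero {s : Set X} {x : X} [Nontrivial (R x)] :
    piIndicator R s x = 0 ↔ x ∉ s := by
  by_cases hx : x ∈ s <;> simp [piIndicator, hx]

theorem piIndicator_mul (s t : Set X) :
    piIndicator R s * piIndicator R t = piIndicator R (s ∩ t) := by
  ext x
  by_cases hs : x ∈ s <;> by_cases ht : x ∈ t <;> simp [piIndicator, hs, ht]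

theorem piIndicator_add_compl (s : Set X) : piIndicator R s + piIndicator R sᶜ = 1 := by
  ext x
  by_cases hs : x ∈ s <;> simp [piIndicator, hs]

theorem piIndicator_empty : piIndicator R (∅ : Set X) = 0 := by
  ext x; simp [piIndicator]

theorem piIndicator_univ : piIndicator R (Set.univ : Set X) = 1 := by
  ext x; simp [piIndicator]

theorem mul_piIndicator_zeroSet (f : ∀ x, R x) : f * piIndicator R {x | f x = 0} = 0 := by
  ext x
  by_cases hx : f x = 0 <;> simp [piIndicator, hx]

theorem piIndicator_compl_mem_iff {p : Ideal (∀ x, R x)} [hp : p.IsPrime] (s : Set X) :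
    piIndicator R sᶜ ∈ p ↔ piIndicator R s ∉ p := by
  refine ⟨fun hc hs => hp.ne_top ?_, fun hs => ?_⟩
  · rw [Ideal.eq_top_iff_one, ← piIndicator_add_compl s]
    exact add_mem hs hc
  · refine (hp.mem_or_mem ?_).resolve_left hs
    rw [piIndicator_mul, Set.inter_compl_self, piIndicator_empty]
    exact p.zero_mem

variable (R)

def ultrafilterIdeal (U : Ultrafilter X) : Ideal (∀ x, R x) where
  carrier := {f | ∀ᶠ x in U, f x = 0}
  zero_mem' := Filter.Eventually.of_forall fun _ => rfl
  add_mem' hf hg := hf.mp (hg.mono fun x hg hf => by simp [hf, hg])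
  smul_mem' c _ hf := hf.mono fun x h => by simp [h]

instance [∀ x, IsDomain (R x)] (U : Ultrafilter X) : (ultrafilterIdeal R U).IsPrime where
  ne_top' h := by
    obtain ⟨x, hx⟩ := ((Ideal.eq_top_iff_one _).mp h).exists
    exact one_ne_zero hx
  mem_or_mem' hfg := Ultrafilter.eventually_or.mp (hfg.mono fun _ h => mul_eq_zero.mp h)

noncomputable def primeUltrafilter (p : Ideal (∀ x, R x)) [hp : p.IsPrime] : Ultrafilter X :=
  Ultrafilter.ofComplNotMemIff
    { sets := {s | piIndicator R s ∉ p}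
      univ_sets := by
        rw [Set.mem_ofPred_eq, piIndicator_univ]
        exact hp.ne_top ∘ (Ideal.eq_top_iff_one p).mpr
      sets_of_superset := fun {s t} hs hst ht => hs <| by
        rw [← Set.inter_eq_left.mpr hst, ← piIndicator_mul]
        exact p.mul_mem_left _ ht
      inter_sets := fun {s t} hs ht h => by
        rw [← piIndicator_mul] at h
        exact (hp.mem_or_mem h).elim hs ht }
    fun s => not_not.trans (piIndicator_compl_mem_iff s)

variable {R}

theorem mem_ultrafilterIdeal {U : Ultrafilter X} {f : ∀ x, R x} :
    f ∈ ultrafilterIdeal R U ↔ ∀ᶠ x in U, f x = 0 := Iff.rfl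

theorem mem_primeUltrafilter {p : Ideal (∀ x, R x)} [p.IsPrime] {s : Set X} :
    s ∈ primeUltrafilter R p ↔ piIndicator R s ∉ p := Iff.rfl

theorem ultrafilterIdeal_primeUltrafilter_le (p : Ideal (∀ x, R x)) [hp : p.IsPrime] :
    ultrafilterIdeal R (primeUltrafilter R p) ≤ p := fun f hf =>
  (hp.mem_or_mem (mul_piIndicator_zeroSet f ▸ p.zero_mem)).resolve_right hf

theorem primeUltrafilter_eq_of_le {p q : Ideal (∀ x, R x)} [p.IsPrime] [q.IsPrime] (h : q ≤ p) :
    primeUltrafilter R q = primeUltrafilter R p :=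
  Ultrafilter.eq_of_le (f := primeUltrafilter R q) (g := primeUltrafilter R p) fun s hs =>
    show piIndicator R s ∉ q from fun hq => hs (h hq)

theorem eq_ultrafilterIdeal_of_mem_minimalPrimes {p : Ideal (∀ x, R x)} [p.IsPrime]
    [∀ x, IsDomain (R x)] (hp : p ∈ minimalPrimes (∀ x, R x)) :
    p = ultrafilterIdeal R (primeUltrafilter R p) :=
  le_antisymm (hp.2 ⟨inferInstance, bot_le⟩ (ultrafilterIdeal_primeUltrafilter_le p))
    (ultrafilterIdeal_primeUltrafilter_le p)

variable (R)

theorem primeUltrafilter_ultrafilterIdeal [∀ x, IsDomain (R x)] (U : Ultrafilter X) :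
    primeUltrafilter R (ultrafilterIdeal R U) = U := by
  ext s
  simp only [mem_primeUltrafilter, mem_ultrafilterIdeal, piIndicator_apply_eq_zero]
  exact not_iff_comm.mpr Ultrafilter.compl_mem_iff_notMem.symm

theorem ultrafilterIdeal_mem_minimalPrimes [∀ x, IsDomain (R x)] (U : Ultrafilter X) :
    ultrafilterIdeal R U ∈ minimalPrimes (∀ x, R x) := by
  refine ⟨⟨inferInstance, bot_le⟩, fun q ⟨hq, _⟩ hle => ?_⟩
  calc ultrafilterIdeal R U
      = ultrafilterIdeal R (primeUltrafilter R q) := by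
        rw [primeUltrafilter_eq_of_le hle, primeUltrafilter_ultrafilterIdeal]
    _ ≤ q := ultrafilterIdeal_primeUltrafilter_le q

theorem continuous_ultrafilterIdeal [∀ x, IsDomain (R x)] :
    Continuous fun U : Ultrafilter X =>
      (⟨ultrafilterIdeal R U, inferInstance⟩ : PrimeSpectrum (∀ x, R x)) := by
  rw [PrimeSpectrum.isTopologicalBasis_basic_opens.continuous_iff]
  rintro _ ⟨f, rfl⟩
  exact (ultrafilter_isClosed_basic {x | f x = 0}).isOpen_compl

theorem PrimeSpectrum.compactSpace_minimalPrimes_pi [∀ x, IsDomain (R x)] :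
    CompactSpace {p : PrimeSpectrum (∀ x, R x) // p.asIdeal ∈ minimalPrimes (∀ x, R x)} := by
  refine Function.Surjective.compactSpace (X := Ultrafilter X)
    (f := fun U => ⟨⟨ultrafilterIdeal R U, inferInstance⟩, ultrafilterIdeal_mem_minimalPrimes R U⟩)
    ((continuous_ultrafilterIdeal R).subtype_mk _) fun ⟨p, hp⟩ => ?_
  exact ⟨primeUltrafilter R p.asIdeal, Subtype.ext <| PrimeSpectrum.ext
    (eq_ultrafilterIdeal_of_mem_minimalPrimes hp).symm⟩

end PiDomain

/-- The minimal spectrum of a product of integral domains is quasi-compact and Hausdorff in the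
Zariski topology. -/
theorem stmt3 {X : Type*} (R : X → Type*) [∀ x, CommRing (R x)] [∀ x, IsDomain (R x)] :
    CompactSpace {p : PrimeSpectrum (∀ x, R x) // p.asIdeal ∈ minimalPrimes (∀ x, R x)} ∧
      T2Space {p : PrimeSpectrum (∀ x, R x) // p.asIdeal ∈ minimalPrimes (∀ x, R x)} :=
  ⟨PrimeSpectrum.compactSpace_minimalPrimes_pi R, PrimeSpectrum.t2Space_minimalPrimes⟩
end

section
/- Let Λ = ∏_{x ∈ X} R_x be a direct product of integral domains. The map η : X → Min(Λ) sending x to ker(π_x) is injective, and its image is a dense subset of Min(Λ) in the Zariski topology. Moreover {ker(π_x)} = Min(Λ) ∩ D(Δ_x), where Δ_x is the element of Λ that is 1 in coordinate x and 0 elsewhere; in particular each ker(π_x) is an isolated point of Min(Λ). -/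
/-!
Write `Δ_x = Pi.single x 1`. Since `f * Δ_x = Pi.single x (f x)`, every `f ∈ ker π_x` kills `Δ_x`,
so any prime not containing `Δ_x` contains `ker π_x`. As `ker π_x` is prime (`R x` is a domain) and
does not contain `Δ_x`, it is a minimal prime, and the only minimal prime in `D(Δ_x)`. For density,
a nonempty basic open `D(f)` of `Min(Λ)` has `f ≠ 0`, so `f x ≠ 0` for some `x`, i.e. `ker π_x ∈ D(f)`.
-/

section MinimalPrimes

variable {A : Type*} [CommRing A]

theorem isOpen_setOf_notMem_minimalPrimes (f : A) :
    IsOpen {p : {p : PrimeSpectrum A // p.asIdeal ∈ minimalPrimes A} | f ∉ p.1.asIdeal} :=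
  (PrimeSpectrum.basicOpen f).isOpen.preimage continuous_subtype_val

theorem dense_minimalPrimes_of_forall_ne_zero
    {S : Set {p : PrimeSpectrum A // p.asIdeal ∈ minimalPrimes A}}
    (hS : ∀ f : A, f ≠ 0 → ∃ p ∈ S, f ∉ p.1.asIdeal) : Dense S := by
  rw [dense_iff_inter_open]
  rintro U hU ⟨p, hpU⟩
  obtain ⟨V, hV, rfl⟩ := isOpen_induced_iff.1 hU
  obtain ⟨-, ⟨f, rfl⟩, hpf, hfV⟩ :=
    PrimeSpectrum.isTopologicalBasis_basic_opens.exists_subset_of_mem_open hpU hV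
  have hf : f ≠ 0 := fun h => hpf (h ▸ p.1.asIdeal.zero_mem)
  obtain ⟨q, hqS, hqf⟩ := hS f hf
  exact ⟨q, hfV hqf, hqS⟩

end MinimalPrimes

section PiDomains

theorem mem_ker_evalRingHom {X : Type*} {R : X → Type*} [∀ x, CommRing (R x)] {x : X}
    {f : ∀ y, R y} : f ∈ RingHom.ker (Pi.evalRingHom R x) ↔ f x = 0 :=
  RingHom.mem_ker

variable {X : Type*} (R : X → Type*) [∀ x, CommRing (R x)]

theorem single_one_notMem_ker_evalRingHom [DecidableEq X] [∀ x, Nontrivial (R x)] (x : X) :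
    (Pi.single x 1 : ∀ y, R y) ∉ RingHom.ker (Pi.evalRingHom R x) := by
  simp [RingHom.mem_ker]

theorem ker_evalRingHom_le_of_single_one_notMem [DecidableEq X] {x : X} {q : Ideal (∀ y, R y)}
    [hq : q.IsPrime] (h : (Pi.single x 1 : ∀ y, R y) ∉ q) :
    RingHom.ker (Pi.evalRingHom R x) ≤ q := by
  intro f hf
  have hkill : f * Pi.single x 1 ∈ q := by
    rw [← Pi.single_mul_right, mem_ker_evalRingHom.1 hf, zero_mul, Pi.single_zero]
    exact q.zero_mem
  exact (hq.mem_or_mem hkill).resolve_right h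

variable [∀ x, IsDomain (R x)]

theorem ker_evalRingHom_mem_minimalPrimes (x : X) :
    RingHom.ker (Pi.evalRingHom R x) ∈ minimalPrimes (∀ y, R y) := by
  classical
  refine ⟨⟨RingHom.ker_isPrime _, bot_le⟩, fun q ⟨hq, _⟩ hle => ?_⟩
  exact ker_evalRingHom_le_of_single_one_notMem R fun h =>
    single_one_notMem_ker_evalRingHom R x (hle h)

theorem eq_ker_evalRingHom_iff_single_one_notMem [DecidableEq X] {p : Ideal (∀ y, R y)}
    (hp : p ∈ minimalPrimes (∀ y, R y)) (x : X) :
    p = RingHom.ker (Pi.evalRingHom R x) ↔ (Pi.single x 1 : ∀ y, R y) ∉ p := by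
  refine ⟨fun h => h ▸ single_one_notMem_ker_evalRingHom R x, fun h => ?_⟩
  have := hp.isPrime
  have hle := ker_evalRingHom_le_of_single_one_notMem R h
  exact le_antisymm (hp.2 ⟨RingHom.ker_isPrime _, bot_le⟩ hle) hle

theorem ker_evalRingHom_injective :
    Function.Injective fun x : X => RingHom.ker (Pi.evalRingHom R x) := by
  classical
  intro x y hxy
  by_contra hne
  have hx : (Pi.single y 1 : ∀ z, R z) ∈ RingHom.ker (Pi.evalRingHom R x) :=
    mem_ker_evalRingHom.2 (Pi.single_eq_of_ne hne 1)
  exact single_one_notMem_ker_evalRingHom R y (by simpa only [hxy] using hx)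

theorem dense_setOf_eq_ker_evalRingHom :
    Dense {p : {p : PrimeSpectrum (∀ x, R x) // p.asIdeal ∈ minimalPrimes (∀ x, R x)} |
      ∃ x : X, p.1.asIdeal = RingHom.ker (Pi.evalRingHom R x)} := by
  refine dense_minimalPrimes_of_forall_ne_zero fun f hf => ?_
  obtain ⟨x, hx⟩ := Function.ne_iff.1 hf
  exact ⟨⟨⟨_, RingHom.ker_isPrime _⟩, ker_evalRingHom_mem_minimalPrimes R x⟩, ⟨x, rfl⟩,
    mt mem_ker_evalRingHom.1 hx⟩

end PiDomains

/-- For a product `Λ` of integral domains indexed by `X`, the map `x ↦ ker π_x` into `Min(Λ)` is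
injective, its image is dense in `Min(Λ)`, and `{ker π_x} = Min(Λ) ∩ D(Δ_x)`; in particular each
`ker π_x` is an isolated point of `Min(Λ)`. -/
theorem stmt6 {X : Type*} [DecidableEq X] (R : X → Type*) [∀ x, CommRing (R x)]
    [∀ x, IsDomain (R x)] :
    Function.Injective (fun x : X => RingHom.ker (Pi.evalRingHom R x)) ∧
      Dense {p : {p : PrimeSpectrum (∀ x, R x) // p.asIdeal ∈ minimalPrimes (∀ x, R x)} |
        ∃ x : X, p.1.asIdeal = RingHom.ker (Pi.evalRingHom R x)} ∧
      (∀ x : X,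
        {p : {p : PrimeSpectrum (∀ x, R x) // p.asIdeal ∈ minimalPrimes (∀ x, R x)} |
            p.1.asIdeal = RingHom.ker (Pi.evalRingHom R x)} =
          {p | (Pi.single x 1 : ∀ y, R y) ∉ p.1.asIdeal}) ∧
      ∀ x : X,
        IsOpen {p : {p : PrimeSpectrum (∀ x, R x) // p.asIdeal ∈ minimalPrimes (∀ x, R x)} |
          p.1.asIdeal = RingHom.ker (Pi.evalRingHom R x)} := by
  have hD : ∀ x : X,
      {p : {p : PrimeSpectrum (∀ x, R x) // p.asIdeal ∈ minimalPrimes (∀ x, R x)} |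
          p.1.asIdeal = RingHom.ker (Pi.evalRingHom R x)} =
        {p | (Pi.single x 1 : ∀ y, R y) ∉ p.1.asIdeal} := fun x =>
    Set.ext fun p => eq_ker_evalRingHom_iff_single_one_notMem R p.2 x
  refine ⟨ker_evalRingHom_injective R, dense_setOf_eq_ker_evalRingHom R, hD, fun x => ?_⟩
  rw [hD x]
  exact isOpen_setOf_notMem_minimalPrimes _
end

section
/- Let X be a topological space, A ⊆ X, and suppose that for every x ∈ A and every maximal ideal M of the power set ring P(X) that converges to x, one has A ∉ M. Then A is an open subset of X. -/
open Filter

/-- The maximal ideal of the power set ring associated to an ultrafilter. -/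
def ultraIdeal {X : Type*} (G : Ultrafilter X) : Ideal (AsBoolRing (Set X)) where
  carrier := {S | ofBoolRing S ∉ G}
  add_mem' := by
    intro a b ha hb
    simp only [Set.mem_setOf_eq, ofBoolRing_add] at *
    intro hmem
    have : symmDiff (ofBoolRing a) (ofBoolRing b) ⊆ ofBoolRing a ∪ ofBoolRing b :=
      symmDiff_le_sup
    rcases Ultrafilter.union_mem_iff.mp (G.mem_of_superset hmem this) with h | h
    · exact ha h
    · exact hb h
  zero_mem' := by
    simp only [Set.mem_setOf_eq, ofBoolRing_zero]
    exact G.empty_notMem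
  smul_mem' := by
    intro c a ha
    simp only [Set.mem_setOf_eq, smul_eq_mul, ofBoolRing_mul] at *
    intro hmem
    exact ha (G.mem_of_superset hmem Set.inter_subset_right)

theorem mem_ultraIdeal {X : Type*} (G : Ultrafilter X) (S : AsBoolRing (Set X)) :
    S ∈ ultraIdeal G ↔ ofBoolRing S ∉ G := Iff.rfl

theorem ultraIdeal_isMaximal {X : Type*} (G : Ultrafilter X) :
    (ultraIdeal G).IsMaximal := by
  rw [Ideal.isMaximal_iff]
  constructor
  · rw [mem_ultraIdeal, ofBoolRing_one, not_not]
    exact G.univ_mem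
  · intro J b hMJ hbM hbJ
    have hc : -b + 1 ∈ ultraIdeal G := by
      rw [mem_ultraIdeal] at hbM ⊢
      rw [not_not] at hbM
      rw [ofBoolRing_add, ofBoolRing_neg, ofBoolRing_one]
      intro hmem
      have : (ofBoolRing b)ᶜ ∈ G := by
        have : symmDiff (ofBoolRing b) (⊤ : Set X) = (ofBoolRing b)ᶜ := by
          simp [symmDiff_eq, Set.inter_comm]
        rwa [this] at hmem
      exact (Ultrafilter.compl_mem_iff_notMem.mp this) hbM
    have h1 : b + (-b + 1) ∈ J := J.add_mem hbJ (hMJ hc)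
    rwa [add_neg_cancel_left] at h1

/-- If `A ⊆ X` is such that every maximal ideal of the power set ring `P(X)` converging to a
point of `A` omits `A`, then `A` is open. (A maximal ideal `M` converges to `x` if no open set
containing `x` belongs to `M`.) -/
theorem stmt9 {X : Type*} [TopologicalSpace X] (A : Set X)
    (h : ∀ x ∈ A, ∀ M : Ideal (AsBoolRing (Set X)), M.IsMaximal →
      (∀ U : Set X, IsOpen U → x ∈ U → toBoolRing U ∉ M) → toBoolRing A ∉ M) :
    IsOpen A := by
  rw [isOpen_iff_mem_nhds]
  intro x hx
  rw [Filter.mem_iff_ultrafilter]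
  intro G hG
  have := h x hx (ultraIdeal G) (ultraIdeal_isMaximal G) ?_
  · rw [mem_ultraIdeal, not_not, ofBoolRing_toBoolRing] at this
    exact this
  · intro U hU hxU hUM
    rw [mem_ultraIdeal, ofBoolRing_toBoolRing] at hUM
    exact hUM (hG (hU.mem_nhds hxU))
end

section
/- Let (R_x) be a family of commutative rings indexed by a set X, R = ∏_{x ∈ X} R_x, and M a maximal ideal of the power set ring P(X). Then M* = {f ∈ R : Su(f) ∈ M} is an ideal of R, where Su(f) = {x ∈ X : f_x ≠ 0}. Moreover: if each R_x is an integral domain then R/M* is an integral domain; if each R_x is a field then R/M* is a field. -/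
/-!
In the power set ring `A * B = A ∩ B`, so an ideal `M` is closed under subsets and finite unions,
and a prime `M` contains `A` or `Aᶜ` since `A * Aᶜ = 0`. As `Su(f + g) ⊆ Su(f) ∪ Su(g)` and
`Su(h f) ⊆ Su(f)`, this makes `M*` an ideal. Without zero divisors `Su(f g) = Su(f) ∩ Su(g)`, so
`M*` inherits primality from `M`. Over fields, inverting `f ∉ M*` on its support gives `g` with
`Su(1 - g f) ⊆ Su(f)ᶜ ∈ M`, so `f` is a unit modulo `M*` and `M*` is maximal.
-/

namespace Ideal

variable {α : Type*} [BooleanAlgebra α] {M : Ideal (AsBoolRing α)} {a b : α}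

theorem toBoolRing_mem_of_le (hb : toBoolRing b ∈ M) (hab : a ≤ b) : toBoolRing a ∈ M := by
  rw [← inf_eq_left.mpr hab, toBoolRing_inf]
  exact M.mul_mem_left _ hb

theorem toBoolRing_sup_mem (ha : toBoolRing a ∈ M) (hb : toBoolRing b ∈ M) :
    toBoolRing (a ⊔ b) ∈ M := by
  rw [← symmDiff_symmDiff_inf, toBoolRing_symmDiff, toBoolRing_symmDiff]
  exact M.add_mem (M.add_mem ha hb) (toBoolRing_mem_of_le ha inf_le_left)

theorem IsPrime.toBoolRing_mem_or_compl_mem (hM : M.IsPrime) (a : α) :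
    toBoolRing a ∈ M ∨ toBoolRing aᶜ ∈ M := by
  apply hM.mem_or_mem
  rw [← toBoolRing_inf, inf_compl_eq_bot, toBoolRing_bot]
  exact M.zero_mem

end Ideal

section SupportIdeal

variable {X : Type*} (R : X → Type*)

/-- The ideal `M*` of the paper. -/
def supportIdeal [∀ x, Semiring (R x)] (M : Ideal (AsBoolRing (Set X))) : Ideal (∀ x, R x) where
  carrier := {f | toBoolRing {x | f x ≠ 0} ∈ M}
  zero_mem' := by simp [show toBoolRing (∅ : Set X) = 0 from toBoolRing_bot]
  add_mem' {f g} hf hg := by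
    refine Ideal.toBoolRing_mem_of_le (Ideal.toBoolRing_sup_mem hf hg) fun x hx => ?_
    by_contra h
    simp only [Set.sup_eq_union, Set.mem_union, Set.mem_ofPred_eq, not_or, not_not] at h
    exact hx (by simp [h.1, h.2])
  smul_mem' c f hf := by
    refine Ideal.toBoolRing_mem_of_le hf fun x hx h => hx ?_
    simp [h]

variable {R} {M : Ideal (AsBoolRing (Set X))}

theorem mem_supportIdeal [∀ x, Semiring (R x)] {f : ∀ x, R x} :
    f ∈ supportIdeal R M ↔ toBoolRing {x | f x ≠ 0} ∈ M :=
  Iff.rfl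

theorem one_notMem_supportIdeal [∀ x, Semiring (R x)] [∀ x, Nontrivial (R x)] (hM : M ≠ ⊤) :
    (1 : ∀ x, R x) ∉ supportIdeal R M := by
  simpa [mem_supportIdeal, ← Set.top_eq_univ, toBoolRing_top, ← M.eq_top_iff_one] using hM

theorem supportIdeal_isPrime [∀ x, Semiring (R x)] [∀ x, Nontrivial (R x)]
    [∀ x, NoZeroDivisors (R x)] (hM : M.IsPrime) : (supportIdeal R M).IsPrime := by
  refine ⟨(Ideal.ne_top_iff_one _).mpr (one_notMem_supportIdeal hM.ne_top), fun {f g} hfg => ?_⟩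
  have hsupport : {x | (f * g) x ≠ 0} = {x | f x ≠ 0} ⊓ {x | g x ≠ 0} := by
    ext x
    simp
  rw [mem_supportIdeal, hsupport, toBoolRing_inf] at hfg
  exact hM.mem_or_mem hfg

theorem exists_one_sub_mul_mem_supportIdeal [∀ x, Ring (R x)] (hR : ∀ x, IsField (R x))
    (hM : M.IsPrime) {f : ∀ x, R x} (hf : f ∉ supportIdeal R M) :
    ∃ g, 1 - g * f ∈ supportIdeal R M := by
  have hinv (x : X) : ∃ y : R x, f x ≠ 0 → y * f x = 1 := by
    by_cases hx : f x = 0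
    · exact ⟨0, fun h => absurd hx h⟩
    · obtain ⟨y, hy⟩ := (hR x).mul_inv_cancel hx
      exact ⟨y, fun _ => (hR x).mul_comm y (f x) ▸ hy⟩
  choose g hg using hinv
  refine ⟨g, ?_⟩
  have hcompl := (hM.toBoolRing_mem_or_compl_mem {x | f x ≠ 0}).resolve_left hf
  refine Ideal.toBoolRing_mem_of_le hcompl fun x hx hfx => hx ?_
  simp [hg x hfx]

theorem supportIdeal_isMaximal [∀ x, Ring (R x)] (hR : ∀ x, IsField (R x)) (hM : M.IsMaximal) :
    (supportIdeal R M).IsMaximal := by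
  have : ∀ x, Nontrivial (R x) := fun x => ⟨(hR x).exists_pair_ne⟩
  refine Ideal.isMaximal_iff.mpr ⟨one_notMem_supportIdeal hM.ne_top, fun J f hIJ hf hfJ => ?_⟩
  obtain ⟨g, hg⟩ := exists_one_sub_mul_mem_supportIdeal hR hM.isPrime hf
  simpa using J.add_mem (hIJ hg) (J.mul_mem_left g hfJ)

end SupportIdeal

/-- For a family of commutative rings `(R_x)` and a maximal ideal `M` of the power set ring
`P(X)`, the set `M* = {f : Su(f) ∈ M}` is an ideal of `∏ R_x`; if each `R_x` is a domain then
the quotient by `M*` is a domain, and if each `R_x` is a field then the quotient is a field. -/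
theorem stmt16 {X : Type*} (R : X → Type*) [∀ x, CommRing (R x)]
    (M : Ideal (AsBoolRing (Set X))) (hM : M.IsMaximal) :
    ∃ I : Ideal (∀ x, R x),
      (∀ f : ∀ x, R x, f ∈ I ↔ toBoolRing {x : X | f x ≠ 0} ∈ M) ∧
      ((∀ x, IsDomain (R x)) → IsDomain ((∀ x, R x) ⧸ I)) ∧
      ((∀ x, IsField (R x)) → IsField ((∀ x, R x) ⧸ I)) := by
  refine ⟨supportIdeal R M, fun _ => mem_supportIdeal, fun _ => ?_, fun hR => ?_⟩
  · have := supportIdeal_isPrime (R := R) hM.isPrime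
    exact Ideal.Quotient.isDomain _
  · exact (Ideal.Quotient.maximal_ideal_iff_isField_quotient _).mp (supportIdeal_isMaximal hR hM)
end

section
/- Let (R_x) be a family of commutative local rings with maximal ideals m_x indexed by X, R = ∏ R_x, and M a maximal ideal of P(X). Define M* = {f ∈ R : Su(f) ∈ M} and M♭ = {f ∈ R : Ω(f) ∈ M}, where Su(f) = {x : f_x ≠ 0} and Ω(f) = {x : f_x ∉ m_x}. Then R/M* is a local ring whose unique maximal ideal is M♭/M*. -/
section aux
variable {X : Type*} (M : Ideal (AsBoolRing (Set X)))

theorem myDown {s t : Set X} (h : s ⊆ t) (ht : toBoolRing t ∈ M) :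
    toBoolRing s ∈ M := by
  have : toBoolRing s = toBoolRing t * toBoolRing s := by
    rw [← toBoolRing_inf, inf_eq_right.mpr h]
  rw [this]; exact M.mul_mem_right _ ht

theorem myUnion {s t : Set X} (hs : toBoolRing s ∈ M) (ht : toBoolRing t ∈ M) :
    toBoolRing (s ∪ t) ∈ M := by
  have : (s ∪ t : Set X) = symmDiff (symmDiff s t) (s ⊓ t) := (symmDiff_symmDiff_inf s t).symm
  rw [this, toBoolRing_symmDiff, toBoolRing_symmDiff, toBoolRing_inf]
  exact M.add_mem (M.add_mem hs ht) (M.mul_mem_right _ hs)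

theorem myCompl (hM : M.IsMaximal) {s : Set X} (hs : toBoolRing s ∉ M) :
    toBoolRing sᶜ ∈ M := by
  have h0 : toBoolRing s * toBoolRing sᶜ ∈ M := by
    rw [← toBoolRing_inf, inf_compl_eq_bot, toBoolRing_bot]
    exact M.zero_mem
  exact (hM.isPrime.mem_or_mem h0).resolve_left hs
end aux

/-- For a family of local rings `(R_x, m_x)` and a maximal ideal `M` of the power set ring
`P(X)`, the ultraproduct `R/M*` is a local ring whose unique maximal ideal is `M♭/M*`, where
`M* = {f : Su(f) ∈ M}` and `M♭ = {f : Ω(f) ∈ M}`. -/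
theorem stmt17 {X : Type*} (R : X → Type*) [∀ x, CommRing (R x)] [∀ x, IsLocalRing (R x)]
    (M : Ideal (AsBoolRing (Set X))) (hM : M.IsMaximal) :
    ∃ I J : Ideal (∀ x, R x),
      (∀ f : ∀ x, R x, f ∈ I ↔ toBoolRing {x : X | f x ≠ 0} ∈ M) ∧
      (∀ f : ∀ x, R x,
        f ∈ J ↔ toBoolRing {x : X | f x ∉ IsLocalRing.maximalIdeal (R x)} ∈ M) ∧
      IsLocalRing ((∀ x, R x) ⧸ I) ∧
      (∀ K : Ideal ((∀ x, R x) ⧸ I), K.IsMaximal ↔ K = J.map (Ideal.Quotient.mk I)) := by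
  classical
  set m := fun x => IsLocalRing.maximalIdeal (R x) with hm
  let I : Ideal (∀ x, R x) :=
    { carrier := {f | toBoolRing {x : X | f x ≠ 0} ∈ M}
      zero_mem' := by
        have h0 : {x : X | (0 : ∀ x, R x) x ≠ 0} = (⊥ : Set X) := by ext x; simp
        simp only [Set.mem_setOf_eq, h0, toBoolRing_bot]; exact M.zero_mem
      add_mem' := by
        intro f g hf hg
        refine myDown M (t := {x : X | f x ≠ 0} ∪ {x : X | g x ≠ 0}) ?_ (myUnion M hf hg)
        intro x hx
        by_contra h
        simp only [Set.mem_union, Set.mem_setOf_eq, not_or, not_not] at h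
        exact hx (by simp [h.1, h.2])
      smul_mem' := by
        intro c f hf
        refine myDown M (t := {x : X | f x ≠ 0}) ?_ hf
        intro x hx
        simp only [Set.mem_setOf_eq] at hx ⊢
        intro h; exact hx (by simp [h]) }
  let J : Ideal (∀ x, R x) :=
    { carrier := {f | toBoolRing {x : X | f x ∉ m x} ∈ M}
      zero_mem' := by
        have h0 : {x : X | (0 : ∀ x, R x) x ∉ m x} = (⊥ : Set X) := by
          ext x; simp [(m x).zero_mem]
        simp only [Set.mem_setOf_eq, h0, toBoolRing_bot]; exact M.zero_mem
      add_mem' := by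
        intro f g hf hg
        refine myDown M (t := {x : X | f x ∉ m x} ∪ {x : X | g x ∉ m x}) ?_ (myUnion M hf hg)
        intro x hx
        by_contra h
        simp only [Set.mem_union, Set.mem_setOf_eq, not_or, not_not] at h
        exact hx ((m x).add_mem h.1 h.2)
      smul_mem' := by
        intro c f hf
        refine myDown M (t := {x : X | f x ∉ m x}) ?_ hf
        intro x hx
        simp only [Set.mem_setOf_eq] at hx ⊢
        intro h; exact hx ((m x).mul_mem_left _ h) }
  have hImem : ∀ f : ∀ x, R x, f ∈ I ↔ toBoolRing {x : X | f x ≠ 0} ∈ M := fun f => Iff.rfl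
  have hJmem : ∀ f : ∀ x, R x, f ∈ J ↔ toBoolRing {x : X | f x ∉ m x} ∈ M := fun f => Iff.rfl
  -- I ≤ J
  have hIJ : I ≤ J := by
    intro f hf
    rw [hJmem]
    refine myDown M (t := {x : X | f x ≠ 0}) ?_ ((hImem f).mp hf)
    intro x hx
    simp only [Set.mem_setOf_eq] at hx ⊢
    intro h; exact hx (by simp [h, (m x).zero_mem])
  -- 1 ∉ M
  have hone : (1 : AsBoolRing (Set X)) ∉ M := (Ideal.ne_top_iff_one M).mp hM.ne_top
  -- J proper
  have hJne : (1 : ∀ x, R x) ∉ J := by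
    rw [hJmem]
    have h1 : {x : X | (1 : ∀ x, R x) x ∉ m x} = (⊤ : Set X) := by
      ext x
      simp only [Set.mem_setOf_eq, Set.top_eq_univ, Set.mem_univ, iff_true, Pi.one_apply]
      exact fun h => ((IsLocalRing.maximalIdeal.isMaximal (R x)).ne_top) (Ideal.eq_top_of_isUnit_mem _ h isUnit_one)
    rw [h1, toBoolRing_top]
    exact hone
  -- I proper
  have hIne : I ≠ ⊤ := by
    intro h
    have h1 : (1 : ∀ x, R x) ∈ I := h ▸ Submodule.mem_top
    exact hJne (hIJ h1)
  haveI : Nontrivial ((∀ x, R x) ⧸ I) := Ideal.Quotient.nontrivial_iff.mpr hIne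
  -- inverse mod I for f ∉ J
  have hInv : ∀ f : ∀ x, R x, f ∉ J → ∃ g : ∀ x, R x, f * g - 1 ∈ I := by
    intro f hf
    refine ⟨fun x => Ring.inverse (f x), ?_⟩
    rw [hImem]
    have hc : toBoolRing ({x : X | f x ∉ m x}ᶜ) ∈ M := myCompl M hM (by rwa [hJmem] at hf)
    refine myDown M (t := {x : X | f x ∉ m x}ᶜ) ?_ hc
    intro x hx
    simp only [Set.mem_setOf_eq] at hx
    simp only [Set.mem_compl_iff, Set.mem_setOf_eq, not_not]
    by_contra hmem
    have hu : IsUnit (f x) :=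
      not_not.mp (fun hnu => hmem ((IsLocalRing.mem_maximalIdeal _).mpr hnu))
    apply hx
    simp [Ring.mul_inverse_cancel _ hu]
  -- nonunits = J.map mk
  have hsurj : Function.Surjective (Ideal.Quotient.mk I) := Ideal.Quotient.mk_surjective
  have hNon : ∀ a : (∀ x, R x) ⧸ I, ¬IsUnit a ↔ a ∈ J.map (Ideal.Quotient.mk I) := by
    intro a
    obtain ⟨f, rfl⟩ := hsurj a
    constructor
    · intro hnu
      by_cases hf : f ∈ J
      · exact Ideal.mem_map_of_mem _ hf
      · obtain ⟨g, hg⟩ := hInv f hf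
        exfalso
        apply hnu
        refine IsUnit.of_mul_eq_one (Ideal.Quotient.mk I g) ?_
        rw [← map_mul]
        rw [← sub_eq_zero, ← map_one (Ideal.Quotient.mk I), ← map_sub]
        exact Ideal.Quotient.eq_zero_iff_mem.mpr hg
    · intro hmem hu
      obtain ⟨f', hf', hff⟩ := (Ideal.mem_map_iff_of_surjective _ hsurj).mp hmem
      obtain ⟨u, hu'⟩ := hu
      obtain ⟨b, hb⟩ := hsurj (↑u⁻¹)
      have h1 : Ideal.Quotient.mk I (f' * b - 1) = 0 := by
        rw [map_sub, map_mul, hff, hb, ← hu', map_one]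
        simp
      have h2 : f' * b - 1 ∈ I := Ideal.Quotient.eq_zero_iff_mem.mp h1
      have h3 : (1 : ∀ x, R x) ∈ J := by
        have : f' * b - (f' * b - 1) ∈ J := J.sub_mem (J.mul_mem_right _ hf') (hIJ h2)
        simpa using this
      exact hJne h3
  have hloc : IsLocalRing ((∀ x, R x) ⧸ I) := by
    apply IsLocalRing.of_nonunits_add
    intro a b ha hb
    rw [mem_nonunits_iff] at ha hb ⊢
    rw [hNon] at ha hb ⊢
    exact Ideal.add_mem _ ha hb
  haveI := hloc
  refine ⟨I, J, hImem, hJmem, hloc, ?_⟩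
  have hmaxeq : J.map (Ideal.Quotient.mk I) = IsLocalRing.maximalIdeal ((∀ x, R x) ⧸ I) := by
    ext a
    rw [IsLocalRing.mem_maximalIdeal, mem_nonunits_iff, ← hNon]
  intro K
  constructor
  · intro hK
    rw [hmaxeq]
    exact IsLocalRing.eq_maximalIdeal hK
  · intro hK
    rw [hK, hmaxeq]
    exact IsLocalRing.maximalIdeal.isMaximal _
end
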